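/- arXiv:1909.00658 — 3 statements merged into one kernel-verified Lean document; each statement's English description precedes it below -/
import Mathlib

section
/- Let $h \in (1/2,1)$. Define $u_\alpha:[0,1]\to\mathbb{R}$ to be the continuous piecewise linear function with $u_\alpha(0)=1$, $u_\alpha(1-h)=\alpha$, $u_\alpha(1)=0$. Then the function $\alpha \mapsto \int_0^1 |1-u_\alpha(x)|\,dx$ on $\mathbb{R}$ attains its minimum uniquely at $\alpha=\sqrt{2h}$. -/
/-!
On `[0, 1 - h]` the error `1 - u_α` is `(1 - α) t` and on `[1 - h, 1]` it is `1 - α t`, after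
rescaling each element to `t ∈ [0, 1]`. Hence the `L¹` error is
`(1 - h) |1 - α| / 2 + h ∫₀¹ |1 - α t| dt`, which equals `(1 + h - α) / 2` for `α ≤ 1` and
`α / 2 + h / α - (1 + h) / 2` for `α ≥ 1`. The latter exceeds its value at `m = √(2h) > 1` by
`(α - m)² / (2α)`, and that minimum lies below the value `h / 2` at `α = 1` since `(m - 1)² > 0`.
-/

open MeasureTheory intervalIntegral

/-- Continuous piecewise linear function on the two-element mesh `{(0,1-h),(1-h,1)}`
with nodal values `a` at `0`, `b` at `1-h`, `c` at `1`. -/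
noncomputable def pl2 (h a b c : ℝ) (x : ℝ) : ℝ :=
  if x ≤ 1 - h then a + (b - a) * x / (1 - h)
  else b + (c - b) * (x - (1 - h)) / h

section PiecewiseLinear

variable {h : ℝ} (a b c : ℝ)

theorem continuous_pl2 (hh : h ≠ 1) : Continuous (pl2 h a b c) := by
  have hs : 1 - h ≠ 0 := sub_ne_zero.2 hh.symm
  refine Continuous.if_le (by fun_prop) (by fun_prop) continuous_id continuous_const ?_
  intro x hx
  rw [hx]
  field_simp
  ring

theorem pl2_mul_of_le (hh : h < 1) {t : ℝ} (ht : t ≤ 1) :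
    pl2 h a b c ((1 - h) * t) = a + (b - a) * t := by
  have hs : 0 < 1 - h := sub_pos.2 hh
  rw [pl2, if_pos (mul_le_of_le_one_right hs.le ht)]
  field_simp

theorem pl2_one_sub_mul_of_le (hh0 : 0 < h) (hh1 : h < 1) {t : ℝ} (ht : t ≤ 1) :
    pl2 h a b c (1 - h * t) = c + (b - c) * t := by
  rcases ht.lt_or_eq with ht | rfl
  · rw [pl2, if_neg (by nlinarith)]
    field_simp
    ring
  · simpa using pl2_mul_of_le a b c hh1 le_rfl

variable {E : Type*} [NormedAddCommGroup E] [NormedSpace ℝ E]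

theorem integral_comp_pl2 {f : ℝ → E} (hf : Continuous f) (hh0 : 0 < h) (hh1 : h < 1) :
    ∫ x in (0 : ℝ)..1, f (pl2 h a b c x) =
      (1 - h) • (∫ t in (0 : ℝ)..1, f (a + (b - a) * t)) +
        h • ∫ t in (0 : ℝ)..1, f (c + (b - c) * t) := by
  have hs : 1 - h ≠ 0 := sub_ne_zero.2 hh1.ne'
  have hint : ∀ p q : ℝ, IntervalIntegrable (fun x => f (pl2 h a b c x)) volume p q :=
    fun _ _ => (hf.comp (continuous_pl2 a b c hh1.ne)).intervalIntegrable _ _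
  have left : ∫ x in (0 : ℝ)..1 - h, f (pl2 h a b c x) =
      (1 - h) • ∫ t in (0 : ℝ)..1, f (a + (b - a) * t) := by
    calc ∫ x in (0 : ℝ)..1 - h, f (pl2 h a b c x)
        = (1 - h) • ∫ t in (0 : ℝ)..1, f (pl2 h a b c ((1 - h) * t)) := by
          rw [integral_comp_mul_left (fun x => f (pl2 h a b c x)) hs, smul_smul,
            mul_inv_cancel₀ hs, one_smul, mul_zero, mul_one]
      _ = (1 - h) • ∫ t in (0 : ℝ)..1, f (a + (b - a) * t) := by
          refine congrArg _ (integral_congr fun t ht => ?_)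
          rw [Set.uIcc_of_le zero_le_one] at ht
          simp only [pl2_mul_of_le a b c hh1 ht.2]
  have right : ∫ x in 1 - h..1, f (pl2 h a b c x) =
      h • ∫ t in (0 : ℝ)..1, f (c + (b - c) * t) := by
    calc ∫ x in 1 - h..1, f (pl2 h a b c x)
        = h • ∫ t in (0 : ℝ)..1, f (pl2 h a b c (1 - h * t)) := by
          rw [integral_comp_sub_mul (fun x => f (pl2 h a b c x)) hh0.ne', smul_smul,
            mul_inv_cancel₀ hh0.ne', one_smul, mul_zero, mul_one, sub_zero]
      _ = h • ∫ t in (0 : ℝ)..1, f (c + (b - c) * t) := by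
          refine congrArg _ (integral_congr fun t ht => ?_)
          rw [Set.uIcc_of_le zero_le_one] at ht
          simp only [pl2_one_sub_mul_of_le a b c hh0 hh1 ht.2]
  rw [← integral_add_adjacent_intervals (hint 0 (1 - h)) (hint (1 - h) 1), left, right]

end PiecewiseLinear

theorem integral_const_add_mul (p s a b : ℝ) :
    ∫ x in a..b, (p + s * x) = p * (b - a) + s * (b ^ 2 - a ^ 2) / 2 := by
  rw [integral_add intervalIntegrable_const ((continuous_const_mul s).intervalIntegrable _ _),
    intervalIntegral.integral_const, intervalIntegral.integral_const_mul, integral_id, smul_eq_mul]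
  ring

theorem integral_abs_mul_id (k : ℝ) : ∫ t in (0 : ℝ)..1, |k * t| = |k| / 2 := by
  rw [integral_congr (g := fun t => 0 + |k| * t) fun t ht => ?_, integral_const_add_mul]
  · ring
  · rw [Set.uIcc_of_le zero_le_one] at ht
    simp [abs_mul, abs_of_nonneg ht.1]

theorem integral_abs_one_sub_mul_of_le_one {β : ℝ} (hβ : β ≤ 1) :
    ∫ t in (0 : ℝ)..1, |1 - β * t| = 1 - β / 2 := by
  rw [integral_congr (g := fun t => 1 + -β * t) fun t ht => ?_, integral_const_add_mul]
  · ring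
  · rw [Set.uIcc_of_le zero_le_one] at ht
    rw [abs_of_nonneg (by nlinarith [ht.1, ht.2])]
    ring

theorem integral_abs_one_sub_mul_of_one_le {β : ℝ} (hβ : 1 ≤ β) :
    ∫ t in (0 : ℝ)..1, |1 - β * t| = β / 2 - 1 + 1 / β := by
  have hβ0 : 0 < β := by linarith
  have hint : ∀ p q : ℝ, IntervalIntegrable (fun t => |1 - β * t|) volume p q :=
    fun _ _ => (by fun_prop : Continuous fun t : ℝ => |1 - β * t|).intervalIntegrable _ _
  have left : ∫ t in (0 : ℝ)..β⁻¹, |1 - β * t| = ∫ t in (0 : ℝ)..β⁻¹, (1 + -β * t) := by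
    refine integral_congr fun t ht => ?_
    rw [Set.uIcc_of_le (by positivity)] at ht
    have : β * t ≤ 1 := by simpa [hβ0.ne'] using mul_le_mul_of_nonneg_left ht.2 hβ0.le
    rw [abs_of_nonneg (by linarith)]
    ring
  have right : ∫ t in β⁻¹..1, |1 - β * t| = ∫ t in β⁻¹..1, (-1 + β * t) := by
    refine integral_congr fun t ht => ?_
    rw [Set.uIcc_of_le (inv_le_one_of_one_le₀ hβ)] at ht
    have : 1 ≤ β * t := by simpa [hβ0.ne'] using mul_le_mul_of_nonneg_left ht.1 hβ0.le
    rw [abs_of_nonpos (by linarith)]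
    ring
  rw [← integral_add_adjacent_intervals (hint 0 β⁻¹) (hint β⁻¹ 1), left, right,
    integral_const_add_mul, integral_const_add_mul]
  field_simp
  ring

theorem integral_abs_one_sub_pl2 {h : ℝ} (hh0 : 0 < h) (hh1 : h < 1) (α : ℝ) :
    ∫ x in (0 : ℝ)..1, |1 - pl2 h 1 α 0 x| =
      (1 - h) * (|1 - α| / 2) + h * ∫ t in (0 : ℝ)..1, |1 - α * t| := by
  have hf : Continuous fun y : ℝ => |1 - y| := by fun_prop
  simp only [integral_comp_pl2 1 α 0 hf hh0 hh1, smul_eq_mul, zero_add, sub_zero,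
    show ∀ t, 1 - (1 + (α - 1) * t) = (1 - α) * t from fun t => by ring]
  rw [integral_abs_mul_id (1 - α)]

theorem integral_abs_one_sub_pl2_of_le_one {h α : ℝ} (hh0 : 0 < h) (hh1 : h < 1)
    (hα : α ≤ 1) : ∫ x in (0 : ℝ)..1, |1 - pl2 h 1 α 0 x| = (1 + h - α) / 2 := by
  rw [integral_abs_one_sub_pl2 hh0 hh1, integral_abs_one_sub_mul_of_le_one hα,
    abs_of_nonneg (by linarith)]
  ring

theorem integral_abs_one_sub_pl2_of_one_le {h α : ℝ} (hh0 : 0 < h) (hh1 : h < 1)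
    (hα : 1 ≤ α) : ∫ x in (0 : ℝ)..1, |1 - pl2 h 1 α 0 x| = α / 2 + h / α - (1 + h) / 2 := by
  rw [integral_abs_one_sub_pl2 hh0 hh1, integral_abs_one_sub_mul_of_one_le hα,
    abs_of_nonpos (by linarith)]
  ring

theorem stmt1 (h : ℝ) (hh0 : 1 / 2 < h) (hh1 : h < 1) :
    ∀ α : ℝ, α ≠ Real.sqrt (2 * h) →
      (∫ x in (0:ℝ)..1, |1 - pl2 h 1 (Real.sqrt (2 * h)) 0 x|) <
        ∫ x in (0:ℝ)..1, |1 - pl2 h 1 α 0 x| := by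
  intro α hα
  have hh : 0 < h := by linarith
  set m := Real.sqrt (2 * h)
  have hm2 : m ^ 2 = 2 * h := Real.sq_sqrt (by linarith)
  have hm1 : 1 < m := by nlinarith [Real.sqrt_nonneg (2 * h)]
  have hhm : h / m = m / 2 := by field_simp; linarith
  rw [integral_abs_one_sub_pl2_of_one_le hh hh1 hm1.le, hhm]
  rcases le_total α 1 with hα1 | hα1
  · rw [integral_abs_one_sub_pl2_of_le_one hh hh1 hα1]
    nlinarith [sq_pos_of_pos (sub_pos.2 hm1)]
  · have hα0 : 0 < α := by linarith
    have gap : α / 2 + h / α - m = (α - m) ^ 2 / (2 * α) := by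
      field_simp
      linarith
    have gap_pos : 0 < (α - m) ^ 2 / (2 * α) := by
      have := sub_ne_zero.2 hα
      positivity
    rw [integral_abs_one_sub_pl2_of_one_le hh hh1 hα1]
    linarith
end

section
/- Let $h \in (0, 1/2]$. If $u_h$ is a continuous piecewise linear function on the mesh $\{-1,-h,0,h,1\}$ with $u_h(-1)=-1$, $u_h(1)=1$ that minimizes $\int_{-1}^1 |\mathrm{sgn}(x)-v(x)|\,dx$ among all such functions $v$, then $u_h(-h) = -1$, $u_h(h)=1$, and $u_h(0) \in [-1,1]$. -/
open MeasureTheory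

/-- Linear interpolation between `(x0, y0)` and `(x1, y1)`. -/
noncomputable def interp (x0 x1 y0 y1 x : ℝ) : ℝ :=
  y0 + (y1 - y0) * (x - x0) / (x1 - x0)

/-- Continuous piecewise linear function on the mesh `{-1, -h, 0, h, 1}` with
nodal values `a, b, c, d, e`. -/
noncomputable def mesh4 (h a b c d e : ℝ) (x : ℝ) : ℝ :=
  if x ≤ -h then interp (-1) (-h) a b x
  else if x ≤ 0 then interp (-h) 0 b c x
  else if x ≤ h then interp 0 h c d x
  else interp h 1 d e x

/-! On each element the residual `sign x - u(x)` is affine, and for an affine function with end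
values `P`, `Q` on an interval of length `ℓ`, `ℓ (|Q| - |P|) / 2 ≤ ∫ |·|`, strictly if `P ≠ 0`.
Summing over the four elements, the error of the nodal values `(b, c, d)` is at least
`(1 - 2h)(|1 + b| + |1 - d|)/2 + h(|1 + c| + |1 - c|)/2 ≥ h`, while the nodal interpolant
`(-1, 0, 1)` has error at most `h`. So a minimizer attains this bound: for `h ≤ 1/2` that forces
`b = -1` and `d = 1` (otherwise the bound is strict) and `|1 + c| + |1 - c| ≤ 2`. -/

open Set intervalIntegral

section Interp

variable {A B P Q x : ℝ}

lemma continuous_interp (A B P Q : ℝ) : Continuous (interp A B P Q) := by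
  unfold interp; fun_prop

lemma interp_reflect (A B P Q x : ℝ) (hAB : A ≠ B) :
    interp A B P Q (A + B - x) = interp A B Q P x := by
  unfold interp
  field_simp [sub_ne_zero.2 hAB.symm]
  ring

lemma exists_interp_eq_convex_combination (hx : x ∈ Icc A B) :
    ∃ t ∈ Icc (0 : ℝ) 1, ∀ P Q, interp A B P Q x = P * (1 - t) + Q * t :=
  ⟨(x - A) / (B - A),
    ⟨div_nonneg (sub_nonneg.2 hx.1) (sub_nonneg.2 (hx.1.trans hx.2)),
      div_le_one_of_le₀ (by linarith [hx.2]) (sub_nonneg.2 (hx.1.trans hx.2))⟩,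
    fun P Q => by unfold interp; ring⟩

lemma abs_interp_le (hx : x ∈ Icc A B) : |interp A B P Q x| ≤ interp A B |P| |Q| x := by
  obtain ⟨t, ht, heq⟩ := exists_interp_eq_convex_combination hx
  rw [heq, heq]
  calc |P * (1 - t) + Q * t| ≤ |P * (1 - t)| + |Q * t| := abs_add_le _ _
    _ = |P| * (1 - t) + |Q| * t := by
      rw [abs_mul, abs_mul, abs_of_nonneg ht.1, abs_of_nonneg (sub_nonneg.2 ht.2)]

lemma interp_neg_abs_le (hx : x ∈ Icc A B) : interp A B (-|P|) |Q| x ≤ |interp A B P Q x| := by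
  obtain ⟨t, ht, heq⟩ := exists_interp_eq_convex_combination hx
  rw [heq, heq]
  have := abs_sub_abs_le_abs_sub (Q * t) (-(P * (1 - t)))
  rw [abs_neg, sub_neg_eq_add, add_comm (Q * t), abs_mul, abs_mul, abs_of_nonneg ht.1,
    abs_of_nonneg (sub_nonneg.2 ht.2)] at this
  linarith

lemma integral_interp (A B P Q : ℝ) :
    ∫ x in A..B, interp A B P Q x = (B - A) * (P + Q) / 2 := by
  rcases eq_or_ne A B with rfl | hAB
  · simp
  have hBA := sub_ne_zero.2 hAB.symm
  have hlin : interp A B P Q = fun x => P + (Q - P) / (B - A) * (x - A) := by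
    ext x; unfold interp; ring
  have hcont : Continuous fun x : ℝ => (Q - P) / (B - A) * (x - A) := by fun_prop
  simp only [hlin]
  rw [intervalIntegral.integral_add intervalIntegrable_const (hcont.intervalIntegrable _ _),
    intervalIntegral.integral_const_mul, integral_comp_sub_right (fun x => x)]
  simp
  field_simp
  ring

lemma integral_abs_interp_le (hAB : A ≤ B) :
    ∫ x in A..B, |interp A B P Q x| ≤ (B - A) * (|P| + |Q|) / 2 :=
  calc ∫ x in A..B, |interp A B P Q x| ≤ ∫ x in A..B, interp A B |P| |Q| x :=
        integral_mono_on hAB ((continuous_interp ..).abs.intervalIntegrable _ _)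
          ((continuous_interp ..).intervalIntegrable _ _) fun _ hx => abs_interp_le hx
    _ = (B - A) * (|P| + |Q|) / 2 := integral_interp ..

lemma le_integral_abs_interp (hAB : A ≤ B) :
    (B - A) * (|Q| - |P|) / 2 ≤ ∫ x in A..B, |interp A B P Q x| :=
  calc (B - A) * (|Q| - |P|) / 2 = ∫ x in A..B, interp A B (-|P|) |Q| x := by
        rw [integral_interp]; ring
    _ ≤ ∫ x in A..B, |interp A B P Q x| :=
        integral_mono_on hAB ((continuous_interp ..).intervalIntegrable _ _)
          ((continuous_interp ..).abs.intervalIntegrable _ _) fun _ hx => interp_neg_abs_le hx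

lemma lt_integral_abs_interp (hAB : A < B) (hP : P ≠ 0) :
    (B - A) * (|Q| - |P|) / 2 < ∫ x in A..B, |interp A B P Q x| :=
  calc (B - A) * (|Q| - |P|) / 2 = ∫ x in A..B, interp A B (-|P|) |Q| x := by
        rw [integral_interp]; ring
    _ < ∫ x in A..B, |interp A B P Q x| := by
        refine integral_lt_integral_of_continuousOn_of_le_of_exists_lt hAB
          (continuous_interp ..).continuousOn (continuous_interp ..).abs.continuousOn
          (fun _ hx => interp_neg_abs_le (Ioc_subset_Icc_self hx)) ⟨A, left_mem_Icc.2 hAB.le, ?_⟩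
        simpa [interp] using hP

lemma integral_abs_interp_comm (A B P Q : ℝ) :
    ∫ x in A..B, |interp A B P Q x| = ∫ x in A..B, |interp A B Q P x| := by
  rcases eq_or_ne A B with rfl | hAB
  · simp
  have hrefl := integral_comp_sub_left (a := A) (b := B) (fun x => |interp A B P Q x|) (A + B)
  simp only [add_sub_cancel_right, add_sub_cancel_left, interp_reflect _ _ _ _ _ hAB] at hrefl
  exact hrefl.symm

lemma le_integral_abs_interp' (hAB : A ≤ B) :
    (B - A) * (|P| - |Q|) / 2 ≤ ∫ x in A..B, |interp A B P Q x| :=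
  integral_abs_interp_comm A B Q P ▸ le_integral_abs_interp hAB

lemma lt_integral_abs_interp' (hAB : A < B) (hQ : Q ≠ 0) :
    (B - A) * (|P| - |Q|) / 2 < ∫ x in A..B, |interp A B P Q x| :=
  integral_abs_interp_comm A B Q P ▸ lt_integral_abs_interp hAB hQ

end Interp

noncomputable def meshError (h b c d : ℝ) : ℝ :=
  ∫ x in (-1 : ℝ)..1, |Real.sign x - mesh4 h (-1) b c d 1 x|

section MeshError

variable {h b c d : ℝ}

lemma meshError_eq (hh0 : 0 ≤ h) (hh1 : h ≤ 1) :
    meshError h b c d =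
      (∫ x in (-1)..(-h), |interp (-1) (-h) 0 (-(1 + b)) x|) +
      (∫ x in (-h)..0, |interp (-h) 0 (-(1 + b)) (-(1 + c)) x|) +
      (∫ x in 0..h, |interp 0 h (1 - c) (1 - d) x|) +
      ∫ x in h..1, |interp h 1 (1 - d) 0 x| := by
  set f := fun x => |Real.sign x - mesh4 h (-1) b c d 1 x|
  have piece : ∀ {a a' P Q : ℝ}, a ≤ a' → EqOn f (fun x => |interp a a' P Q x|) (Ioo a a') →
      IntervalIntegrable f volume a a' ∧ ∫ x in a..a', f x = ∫ x in a..a', |interp a a' P Q x| :=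
    fun hle heq => ⟨((continuous_interp ..).abs.intervalIntegrable _ _).congr_uIoo
      (uIoo_of_le hle ▸ heq.symm), integral_congr_Ioo_of_le hle heq⟩
  obtain ⟨i1, e1⟩ := piece (a := -1) (a' := -h) (P := 0) (Q := -(1 + b)) (by linarith)
    fun x hx => by
      simp only [f, mesh4, if_pos hx.2.le, Real.sign_of_neg (by linarith [hx.2] : x < 0)]
      unfold interp; ring_nf
  obtain ⟨i2, e2⟩ := piece (a := -h) (a' := 0) (P := -(1 + b)) (Q := -(1 + c)) (by linarith)
    fun x hx => by
      simp only [f, mesh4, if_neg (not_le.2 hx.1), if_pos hx.2.le, Real.sign_of_neg hx.2]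
      unfold interp; ring_nf
  obtain ⟨i3, e3⟩ := piece (a := 0) (a' := h) (P := 1 - c) (Q := 1 - d) hh0
    fun x hx => by
      simp only [f, mesh4, if_neg (not_le.2 (by linarith [hx.1] : -h < x)), if_neg (not_le.2 hx.1),
        if_pos hx.2.le, Real.sign_of_pos hx.1]
      unfold interp; ring_nf
  obtain ⟨i4, e4⟩ := piece (a := h) (a' := 1) (P := 1 - d) (Q := 0) hh1
    fun x hx => by
      simp only [f, mesh4, if_neg (not_le.2 (by linarith [hx.1] : -h < x)),
        if_neg (not_le.2 (by linarith [hx.1] : 0 < x)), if_neg (not_le.2 hx.1),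
        Real.sign_of_pos (by linarith [hx.1] : 0 < x)]
      unfold interp; ring_nf
  rw [meshError, ← integral_add_adjacent_intervals i1 (i2.trans (i3.trans i4)),
    ← integral_add_adjacent_intervals i2 (i3.trans i4), ← integral_add_adjacent_intervals i3 i4,
    e1, e2, e3, e4, add_assoc, add_assoc]

lemma meshError_interpolant_le (hh0 : 0 ≤ h) (hh1 : h ≤ 1) : meshError h (-1) 0 1 ≤ h := by
  rw [meshError_eq hh0 hh1]
  have h1 := integral_abs_interp_le (P := 0) (Q := -(1 + -1)) (by linarith : (-1 : ℝ) ≤ -h)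
  have h2 := integral_abs_interp_le (P := -(1 + -1)) (Q := -(1 + 0)) (by linarith : -h ≤ 0)
  have h3 := integral_abs_interp_le (P := 1 - 0) (Q := 1 - 1) hh0
  have h4 := integral_abs_interp_le (P := 1 - 1) (Q := 0) hh1
  norm_num at h1 h2 h3 h4 ⊢
  linarith

lemma le_meshError (hh0 : 0 ≤ h) (hh1 : h ≤ 1) :
    (1 - 2 * h) * (|1 + b| + |1 - d|) / 2 + h * (|1 + c| + |1 - c|) / 2 ≤ meshError h b c d := by
  rw [meshError_eq hh0 hh1]
  have h1 := le_integral_abs_interp (P := 0) (Q := -(1 + b)) (by linarith : (-1 : ℝ) ≤ -h)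
  have h2 := le_integral_abs_interp (P := -(1 + b)) (Q := -(1 + c)) (by linarith : -h ≤ 0)
  have h3 := le_integral_abs_interp' (P := 1 - c) (Q := 1 - d) hh0
  have h4 := le_integral_abs_interp' (P := 1 - d) (Q := 0) hh1
  simp only [abs_neg, abs_zero] at h1 h2 h3 h4
  linarith

lemma lt_meshError (hh0 : 0 < h) (hh1 : h ≤ 1) (hbd : b ≠ -1 ∨ d ≠ 1) :
    (1 - 2 * h) * (|1 + b| + |1 - d|) / 2 + h * (|1 + c| + |1 - c|) / 2 < meshError h b c d := by
  rw [meshError_eq hh0.le hh1]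
  have h1 := le_integral_abs_interp (P := 0) (Q := -(1 + b)) (by linarith : (-1 : ℝ) ≤ -h)
  have h4 := le_integral_abs_interp' (P := 1 - d) (Q := 0) hh1
  simp only [abs_neg, abs_zero] at h1 h4
  rcases hbd with hb | hd
  · have h2 := lt_integral_abs_interp (P := -(1 + b)) (Q := -(1 + c)) (by linarith : -h < 0)
      (neg_ne_zero.2 fun hb' => hb (by linarith))
    have h3 := le_integral_abs_interp' (P := 1 - c) (Q := 1 - d) hh0.le
    simp only [abs_neg] at h2
    linarith
  · have h2 := le_integral_abs_interp (P := -(1 + b)) (Q := -(1 + c)) (by linarith : -h ≤ 0)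
    have h3 := lt_integral_abs_interp' (P := 1 - c) (Q := 1 - d) hh0 (sub_ne_zero.2 (Ne.symm hd))
    simp only [abs_neg] at h2
    linarith

end MeshError

theorem stmt10 (h : ℝ) (hh0 : 0 < h) (hh : h ≤ 1 / 2) (b₀ c₀ d₀ : ℝ)
    (hmin : ∀ b c d : ℝ,
      (∫ x in (-1:ℝ)..1, |Real.sign x - mesh4 h (-1) b₀ c₀ d₀ 1 x|) ≤
        ∫ x in (-1:ℝ)..1, |Real.sign x - mesh4 h (-1) b c d 1 x|) :
    b₀ = -1 ∧ d₀ = 1 ∧ c₀ ∈ Set.Icc (-1 : ℝ) 1 := by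
  have hh1 : h ≤ 1 := by linarith
  have hopt : meshError h b₀ c₀ d₀ ≤ h :=
    (hmin (-1) 0 1).trans (meshError_interpolant_le hh0.le hh1)
  have hbd_nonneg : 0 ≤ (1 - 2 * h) * (|1 + b₀| + |1 - d₀|) :=
    mul_nonneg (by linarith) (by positivity)
  have htwo : 2 ≤ |1 + c₀| + |1 - c₀| := by linarith [le_abs_self (1 + c₀), le_abs_self (1 - c₀)]
  have hbd : b₀ = -1 ∧ d₀ = 1 := by
    by_contra hne
    linarith [lt_meshError hh0 hh1 (c := c₀) (not_and_or.1 hne),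
      mul_le_mul_of_nonneg_left htwo hh0.le]
  have hc : |1 + c₀| + |1 - c₀| ≤ 2 :=
    le_of_mul_le_mul_left (by linarith [le_meshError hh0.le hh1 (b := b₀) (c := c₀) (d := d₀)]) hh0
  exact ⟨hbd.1, hbd.2, by linarith [neg_le_abs (1 + c₀), le_abs_self (1 - c₀)],
    by linarith [le_abs_self (1 + c₀), neg_le_abs (1 - c₀)]⟩
end

section
/- Let $N \ge 2$ and $h_1,\dots,h_N > 0$ with $\sum_i h_i = 1$ and $h_N \le h_i$ for all $i = 1,\dots,N-1$. Let $U_h$ be the space of continuous piecewise linear functions on the mesh with nodes $x_0 = 0 < x_1 < \dots < x_N = 1$, $x_i - x_{i-1} = h_i$. Then the function $u_h \in U_h$ with $u_h(x_i) = 1$ for $i=0,\dots,N-1$ and $u_h(x_N) = 0$ minimizes $\int_0^1 |1 - v(x)|\,dx$ over all $v \in U_h$ with $v(0)=1$ and $v(1)=0$. -/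
/-!
Duality for `L¹`: if `|ψ| ≤ 1`, then `∫ ψ e ≤ ∫ |e|` for every `e`. Take `e = 1 - v` and `ψ` constant
on each element, equal to `(-1)^(N-i) h_N / h_i` on the `i`-th one; `|ψ| ≤ 1` because the last
element is the smallest. On an element `e` is affine, so the integral of `ψ e` there is
`±h_N (e(x_{i-1}) + e(x_i)) / 2` by the trapezoid rule, and these terms telescope to
`h_N (e(1) ± e(0)) / 2 = h_N / 2`. The function `1 - u_h` vanishes except on the last element, where
it is a nonnegative hat of integral exactly `h_N / 2`.
-/

open MeasureTheory

/-- The nodes of the 1D mesh with element lengths `h 1, …, h N`: `nodes h i = ∑_{j=1}^i h j`. -/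
noncomputable def nodes (h : ℕ → ℝ) (i : ℕ) : ℝ := ∑ j ∈ Finset.Icc 1 i, h j

/-- `v` is affine on each element `[nodes h i, nodes h (i+1)]`, `i = 0, …, N-1`. -/
def IsPiecewiseLinear (h : ℕ → ℝ) (N : ℕ) (v : ℝ → ℝ) : Prop :=
  ∀ i < N, ∃ a b : ℝ, ∀ t ∈ Set.Icc (nodes h i) (nodes h (i + 1)), v t = a * t + b

open Set

theorem integral_affine (a b α β : ℝ) :
    ∫ t in a..b, (α * t + β) = (b - a) * ((α * a + β) + (α * b + β)) / 2 := by
  rw [intervalIntegral.integral_add ((by fun_prop : Continuous fun t : ℝ => α * t).intervalIntegrable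
      a b) intervalIntegrable_const, intervalIntegral.integral_const_mul, integral_id,
    intervalIntegral.integral_const, smul_eq_mul]
  ring

theorem mul_integral_le_integral_abs {f : ℝ → ℝ} {a b c : ℝ} (hab : a ≤ b) (hc : |c| ≤ 1) :
    c * ∫ t in a..b, f t ≤ ∫ t in a..b, |f t| :=
  calc c * ∫ t in a..b, f t ≤ |c| * |∫ t in a..b, f t| := by rw [← abs_mul]; exact le_abs_self _
    _ ≤ |∫ t in a..b, f t| := mul_le_of_le_one_left (abs_nonneg _) hc
    _ ≤ ∫ t in a..b, |f t| := intervalIntegral.abs_integral_le_integral_abs hab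

section AffineOn

variable {f : ℝ → ℝ} {a b α β : ℝ}

theorem continuousOn_of_eqOn_affine (hf : EqOn f (fun t => α * t + β) (Icc a b)) :
    ContinuousOn f (Icc a b) :=
  (continuous_const.mul continuous_id |>.add continuous_const).continuousOn.congr hf

theorem integral_eq_trapezoid_of_eqOn_affine (hab : a ≤ b)
    (hf : EqOn f (fun t => α * t + β) (Icc a b)) :
    ∫ t in a..b, f t = (b - a) * (f a + f b) / 2 := by
  rw [intervalIntegral.integral_congr (uIcc_of_le hab ▸ hf), integral_affine,
    hf (left_mem_Icc.2 hab), hf (right_mem_Icc.2 hab)]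

theorem nonneg_of_eqOn_affine (hf : EqOn f (fun t => α * t + β) (Icc a b))
    (ha : 0 ≤ f a) (hb : 0 ≤ f b) {t : ℝ} (ht : t ∈ Icc a b) : 0 ≤ f t := by
  have hab : a ≤ b := ht.1.trans ht.2
  have hinterp : (b - a) * f t = (b - t) * f a + (t - a) * f b := by
    rw [hf ht, hf (left_mem_Icc.2 hab), hf (right_mem_Icc.2 hab)]
    ring
  rcases hab.eq_or_lt with rfl | hlt
  · rwa [le_antisymm ht.2 ht.1]
  · refine (mul_nonneg_iff_of_pos_left (sub_pos.2 hlt)).1 ?_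
    rw [hinterp]
    exact add_nonneg (mul_nonneg (sub_nonneg.2 ht.2) ha) (mul_nonneg (sub_nonneg.2 ht.1) hb)

theorem integral_abs_eq_trapezoid_of_eqOn_affine (hab : a ≤ b)
    (hf : EqOn f (fun t => α * t + β) (Icc a b)) (ha : 0 ≤ f a) (hb : 0 ≤ f b) :
    ∫ t in a..b, |f t| = (b - a) * (f a + f b) / 2 := by
  rw [← integral_eq_trapezoid_of_eqOn_affine hab hf]
  refine intervalIntegral.integral_congr fun t ht => abs_of_nonneg ?_
  exact nonneg_of_eqOn_affine hf ha hb (uIcc_of_le hab ▸ ht)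

end AffineOn

theorem sum_range_alternating_add (e : ℕ → ℝ) (N : ℕ) :
    ∑ i ∈ Finset.range N, (-1 : ℝ) ^ (N - (i + 1)) * (e i + e (i + 1)) =
      e N - (-1) ^ N * e 0 := by
  have hterm : ∀ i ∈ Finset.range N, (-1 : ℝ) ^ (N - (i + 1)) * (e i + e (i + 1)) =
      (-1) ^ (N - (i + 1)) * e (i + 1) - (-1) ^ (N - i) * e i := by
    intro i hi
    rw [Finset.mem_range] at hi
    rw [show N - i = N - (i + 1) + 1 by omega, pow_succ]
    ring
  rw [Finset.sum_congr rfl hterm, Finset.sum_range_sub (fun i => (-1 : ℝ) ^ (N - i) * e i)]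
  simp

section Mesh

variable {h : ℕ → ℝ} {N : ℕ} {e : ℝ → ℝ}

theorem nodes_zero (h : ℕ → ℝ) : nodes h 0 = 0 := by simp [nodes]

theorem nodes_succ (h : ℕ → ℝ) (i : ℕ) : nodes h (i + 1) = nodes h i + h (i + 1) :=
  Finset.sum_Icc_succ_top (Nat.le_add_left 1 i) h

theorem IsPiecewiseLinear.const_sub (c : ℝ) (he : IsPiecewiseLinear h N e) :
    IsPiecewiseLinear h N (fun t => c - e t) := by
  intro i hi
  obtain ⟨α, β, hαβ⟩ := he i hi
  exact ⟨-α, c - β, fun t ht => by simp only [hαβ t ht]; ring⟩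

section Nonneg

variable (hnonneg : ∀ i, 1 ≤ i → i ≤ N → 0 ≤ h i)
include hnonneg

theorem nodes_le_succ {i : ℕ} (hi : i < N) : nodes h i ≤ nodes h (i + 1) := by
  rw [nodes_succ]
  linarith [hnonneg (i + 1) (Nat.le_add_left 1 i) hi]

theorem IsPiecewiseLinear.integral_abs_eq_sum (he : IsPiecewiseLinear h N e) :
    ∫ t in nodes h 0..nodes h N, |e t| =
      ∑ i ∈ Finset.range N, ∫ t in nodes h i..nodes h (i + 1), |e t| := by
  refine (intervalIntegral.sum_integral_adjacent_intervals fun i hi => ?_).symm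
  obtain ⟨α, β, hαβ⟩ := he i hi
  exact ((continuousOn_of_eqOn_affine hαβ).abs).intervalIntegrable_of_Icc
    (nodes_le_succ hnonneg hi)

theorem IsPiecewiseLinear.integral_abs_of_nonneg_nodes (he : IsPiecewiseLinear h N e)
    (hnodes : ∀ i ≤ N, 0 ≤ e (nodes h i)) :
    ∫ t in nodes h 0..nodes h N, |e t| =
      ∑ i ∈ Finset.range N, h (i + 1) * (e (nodes h i) + e (nodes h (i + 1))) / 2 := by
  rw [he.integral_abs_eq_sum hnonneg]
  refine Finset.sum_congr rfl fun i hi => ?_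
  rw [Finset.mem_range] at hi
  obtain ⟨α, β, hαβ⟩ := he i hi
  rw [integral_abs_eq_trapezoid_of_eqOn_affine (nodes_le_succ hnonneg hi) hαβ
    (hnodes i hi.le) (hnodes (i + 1) hi), nodes_succ, add_sub_cancel_left]

end Nonneg

theorem IsPiecewiseLinear.le_integral_abs (hpos : ∀ i, 1 ≤ i → i ≤ N → 0 < h i) (hlast : ∀ i, 1 ≤ i → i ≤ N - 1 → h N ≤ h i)
    (he : IsPiecewiseLinear h N e) :
    h N * (e (nodes h N) - (-1) ^ N * e (nodes h 0)) / 2 ≤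
      ∫ t in nodes h 0..nodes h N, |e t| := by
  have hnonneg : ∀ i, 1 ≤ i → i ≤ N → 0 ≤ h i := fun i h1 h2 => (hpos i h1 h2).le
  rw [he.integral_abs_eq_sum hnonneg, ← sum_range_alternating_add (fun i => e (nodes h i)),
    Finset.mul_sum, Finset.sum_div]
  refine Finset.sum_le_sum fun i hi => ?_
  rw [Finset.mem_range] at hi
  obtain ⟨α, β, hαβ⟩ := he i hi
  have hhi : 0 < h (i + 1) := hpos (i + 1) (Nat.le_add_left 1 i) hi
  have hψ : |(-1 : ℝ) ^ (N - (i + 1)) * h N / h (i + 1)| ≤ 1 := by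
    rw [abs_div, abs_mul, abs_pow, abs_neg, abs_one, one_pow, one_mul,
      abs_of_pos (hpos N (by omega) le_rfl), abs_of_pos hhi, div_le_one hhi]
    rcases (show i + 1 = N ∨ i + 1 ≤ N - 1 by omega) with hN | hN
    · rw [hN]
    · exact hlast (i + 1) (Nat.le_add_left 1 i) hN
  have hab := nodes_le_succ hnonneg hi
  calc h N * ((-1) ^ (N - (i + 1)) * (e (nodes h i) + e (nodes h (i + 1)))) / 2
      = (-1) ^ (N - (i + 1)) * h N / h (i + 1) *
          ((nodes h (i + 1) - nodes h i) * (e (nodes h i) + e (nodes h (i + 1))) / 2) := by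
        rw [nodes_succ, add_sub_cancel_left]
        field_simp
    _ = (-1) ^ (N - (i + 1)) * h N / h (i + 1) * ∫ t in nodes h i..nodes h (i + 1), e t := by
        rw [integral_eq_trapezoid_of_eqOn_affine hab hαβ]
    _ ≤ ∫ t in nodes h i..nodes h (i + 1), |e t| := mul_integral_le_integral_abs hab hψ

end Mesh

theorem stmt14 (N : ℕ) (hN : 2 ≤ N) (h : ℕ → ℝ)
    (hpos : ∀ i, 1 ≤ i → i ≤ N → 0 < h i)
    (hsum : ∑ i ∈ Finset.Icc 1 N, h i = 1)
    (hlast : ∀ i, 1 ≤ i → i ≤ N - 1 → h N ≤ h i)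
    (uh : ℝ → ℝ) (huhPL : IsPiecewiseLinear h N uh)
    (huhnodes : ∀ i ≤ N - 1, uh (nodes h i) = 1) (huhN : uh (nodes h N) = 0) :
    ∀ v : ℝ → ℝ, IsPiecewiseLinear h N v → v (nodes h 0) = 1 → v (nodes h N) = 0 →
      (∫ x in (0:ℝ)..1, |1 - uh x|) ≤ ∫ x in (0:ℝ)..1, |1 - v x| := by
  intro v hv hv0 hvN
  have hx0 : nodes h 0 = 0 := nodes_zero h
  have hxN : nodes h N = 1 := hsum
  have huh : ∫ x in (0:ℝ)..1, |1 - uh x| = h N / 2 := by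
    obtain ⟨M, rfl⟩ : ∃ M, N = M + 1 := ⟨N - 1, by omega⟩
    have hinner : ∀ i ≤ M, 1 - uh (nodes h i) = 0 := fun i hi => by
      rw [huhnodes i (by omega), sub_self]
    have hnodes : ∀ i ≤ M + 1, 0 ≤ 1 - uh (nodes h i) := fun i hi => by
      rcases hi.eq_or_lt with rfl | hi
      · rw [huhN]; norm_num
      · rw [hinner i (by omega)]
    have hsplit := (huhPL.const_sub 1).integral_abs_of_nonneg_nodes
      (fun i h1 h2 => (hpos i h1 h2).le) hnodes
    rw [hx0, hxN] at hsplit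
    rw [hsplit, Finset.sum_range_succ,
      Finset.sum_eq_zero fun i hi => ?_, hinner M le_rfl, huhN]
    · ring
    · rw [Finset.mem_range] at hi
      rw [hinner i hi.le, hinner (i + 1) hi]
      ring
  calc ∫ x in (0:ℝ)..1, |1 - uh x|
      = h N * ((1 - v (nodes h N)) - (-1) ^ N * (1 - v (nodes h 0))) / 2 := by
        rw [huh, hv0, hvN]; ring
    _ ≤ ∫ x in (0:ℝ)..1, |1 - v x| :=
        hx0 ▸ hxN ▸ (hv.const_sub 1).le_integral_abs hpos hlast
end
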